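/- arXiv:2304.03377 — 3 statements merged into one kernel-verified Lean document; each statement's English description precedes it below -/
import Mathlib

section
/- For any instance I of the online matching problem with reusable resources in which every usage-duration distribution is geometric, i.e. F_i = Geometric(p_i) for each resource i, if p = min_i p_i then Greedy(I) / OPT(I) ≥ (1 + p) / 2. -/
open Finset

/-- An online policy for the online matching problem with reusable resources,
with `N` resources, `T` requests, and neighborhoods `Nbr`.  Upon arrival of
request `t`, the policy observes the time `t`, the set of currently available
resources, and the history of previously observed availability sets, and
matches the request to at most one available resource adjacent to `t`
(`none` means no match). -/
structure Policy (N T : ℕ) (Nbr : Fin T → Finset (Fin N)) where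
  act : Fin T → Finset (Fin N) → List (Finset (Fin N)) → Option (Fin N)
  feasible : ∀ t I hist i, act t I hist = some i → i ∈ I ∩ Nbr t

/-- Sample space of the shared-Bernoulli coupling for geometric usage
durations: `ω i t` is the return flag `P_{it} ~ Bernoulli (p i)`.  A resource
`i` that is unavailable returns at the start of time `t` iff `ω i t = true`;
this makes the usage duration of every match of `i` distributed as
`Geometric (p i)` on `{1, 2, ...}`. -/
abbrev Flags (N T : ℕ) := Fin N → Fin T → Bool

/-- One step of the dynamics at time `t`.  The state is the pair consisting of
the set of resources unavailable at the end of the previous step and the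
history of observed availability sets. -/
def step {N T : ℕ} {Nbr : Fin T → Finset (Fin N)} (π : Policy N T Nbr)
    (ω : Flags N T) (s : Finset (Fin N) × List (Finset (Fin N))) (t : Fin T) :
    Finset (Fin N) × List (Finset (Fin N)) :=
  let busy := s.1.filter fun i => ω i t = false
  let I : Finset (Fin N) := Finset.univ \ busy
  match π.act t I s.2 with
  | none => (busy, I :: s.2)
  | some i => (insert i busy, I :: s.2)

/-- The state just before step `n` (resources unavailable at the end of step
`n-1`, together with the observed history). -/
def stateUpTo {N T : ℕ} {Nbr : Fin T → Finset (Fin N)} (π : Policy N T Nbr)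
    (ω : Flags N T) (n : ℕ) : Finset (Fin N) × List (Finset (Fin N)) :=
  ((List.finRange T).take n).foldl (step π ω) (∅, [])

/-- `I_t`: the set of resources available at time `t` under policy `π`. -/
def avail {N T : ℕ} {Nbr : Fin T → Finset (Fin N)} (π : Policy N T Nbr)
    (ω : Flags N T) (t : Fin T) : Finset (Fin N) :=
  Finset.univ \ ((stateUpTo π ω t.val).1.filter fun i => ω i t = false)

/-- `A_t`: the resource matched at time `t` under policy `π` (`none` = no match). -/
def act {N T : ℕ} {Nbr : Fin T → Finset (Fin N)} (π : Policy N T Nbr)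
    (ω : Flags N T) (t : Fin T) : Option (Fin N) :=
  π.act t (avail π ω t) (stateUpTo π ω t.val).2

/-- The total reward collected by policy `π` on the sample path `ω`. -/
def reward {N T : ℕ} {Nbr : Fin T → Finset (Fin N)} (r : Fin N → ℝ)
    (π : Policy N T Nbr) (ω : Flags N T) : ℝ :=
  ∑ t : Fin T, (act π ω t).elim 0 r

/-- Probability of the flag configuration `ω` when `P_{it} ~ Bernoulli (p i)`
independently. -/
noncomputable def weight {N T : ℕ} (p : Fin N → ℝ) (ω : Flags N T) : ℝ :=
  ∏ i : Fin N, ∏ t : Fin T, if ω i t then p i else 1 - p i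

/-- Expectation over the i.i.d. Bernoulli return flags. -/
noncomputable def expect {N T : ℕ} (p : Fin N → ℝ) (f : Flags N T → ℝ) : ℝ :=
  ∑ ω : Flags N T, weight p ω * f ω

/-- The greedy policy: match the available neighboring resource of largest
index (equivalently, of highest reward, since rewards are sorted). -/
def greedy (N T : ℕ) (Nbr : Fin T → Finset (Fin N)) : Policy N T Nbr where
  act := fun t I _ => if h : (I ∩ Nbr t).Nonempty then some ((I ∩ Nbr t).max' h) else none
  feasible := by
    intro t I hist i hi
    by_cases h : (I ∩ Nbr t).Nonempty
    · rw [dif_pos h, Option.some.injEq] at hi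
      exact hi ▸ Finset.max'_mem _ h
    · rw [dif_neg h] at hi
      exact absurd hi (by simp)

/-- `Greedy(I)`: the expected total reward of the greedy policy. -/
noncomputable def greedyVal (N T : ℕ) (Nbr : Fin T → Finset (Fin N))
    (r : Fin N → ℝ) (p : Fin N → ℝ) : ℝ :=
  expect p (reward r (greedy N T Nbr))

/-- `OPT(I)`: the optimal expected total reward over all (clairvoyant)
policies; such a policy knows the whole instance, including the request
sequence, but observes returns only as they occur. -/
noncomputable def optVal (N T : ℕ) (Nbr : Fin T → Finset (Fin N))
    (r : Fin N → ℝ) (p : Fin N → ℝ) : ℝ :=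
  ⨆ π : Policy N T Nbr, expect p (reward r π)

/-!
Run `π` and greedy on the same return flags and let `D_n` be the set of resources that greedy is
using but `π` is not, with potential `Φ_n = ∑_{i ∈ D_n} r i`. The amortized step quantity
`(1 + p) · (π's reward) - 2 · (greedy's reward) + (1 - p) (Φ_{n+1} - Φ_n)` is nonpositive unless
`π` takes some `i ∈ D_n`. On such a path, setting the return flag of `i` at that step to `true`
leaves `π`'s move unchanged (`π` is not using `i`) but hands `i` to greedy, which then either takes
`i` or keeps a choice worth at least `r i`. By memorylessness that flag is a fresh
Bernoulli(`pv i`) coin, so the two paths carry weights proportional to `1 - pv i` and `pv i ≥ p`,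
and their average is nonpositive. Summing over the steps with `Φ_0 = 0 ≤ Φ_T` gives
`(1 + p) · E[π] ≤ 2 · E[greedy]`.
-/

section Flags

variable {N T : ℕ}

def setFlag (i : Fin N) (t : Fin T) (b : Bool) (ω : Flags N T) : Flags N T :=
  fun j s => if j = i ∧ s = t then b else ω j s

@[simp]
lemma setFlag_self (i : Fin N) (t : Fin T) (b : Bool) (ω : Flags N T) :
    setFlag i t b ω i t = b := by
  simp [setFlag]

lemma setFlag_of_ne {i j : Fin N} {t s : Fin T} (b : Bool) (ω : Flags N T)
    (h : ¬(j = i ∧ s = t)) : setFlag i t b ω j s = ω j s :=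
  if_neg h

lemma setFlag_setFlag (i : Fin N) (t : Fin T) (b b' : Bool) (ω : Flags N T) :
    setFlag i t b (setFlag i t b' ω) = setFlag i t b ω := by
  funext j s
  simp only [setFlag]
  split_ifs <;> rfl

lemma setFlag_eq_self {i : Fin N} {t : Fin T} {b : Bool} {ω : Flags N T} (h : ω i t = b) :
    setFlag i t b ω = ω := by
  funext j s
  simp only [setFlag]
  split_ifs with hjs
  · rw [hjs.1, hjs.2, h]
  · rfl

lemma sum_eq_sum_filter_add_setFlag (i : Fin N) (t : Fin T) (G : Flags N T → ℝ) :
    ∑ ω, G ω = ∑ ω with ω i t = false, (G ω + G (setFlag i t true ω)) := by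
  rw [sum_add_distrib, ← sum_filter_add_sum_filter_not univ (fun ω : Flags N T => ω i t = false)]
  congr 1
  refine sum_nbij' (setFlag i t false) (setFlag i t true) ?_ ?_ ?_ ?_ ?_ <;>
    simp_all [setFlag_setFlag, setFlag_eq_self]

def flagProb (pv : Fin N → ℝ) (i : Fin N) (b : Bool) : ℝ :=
  if b then pv i else 1 - pv i

lemma flagProb_nonneg {pv : Fin N → ℝ} (hpv0 : ∀ i, 0 ≤ pv i) (hpv1 : ∀ i, pv i ≤ 1)
    (i : Fin N) (b : Bool) : 0 ≤ flagProb pv i b := by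
  cases b
  · exact sub_nonneg.2 (hpv1 i)
  · exact hpv0 i

lemma weight_eq_prod_flagProb (pv : Fin N → ℝ) (ω : Flags N T) :
    weight pv ω = ∏ x : Fin N × Fin T, flagProb pv x.1 (ω x.1 x.2) := by
  rw [Fintype.prod_prod_type]
  rfl

lemma weight_nonneg {pv : Fin N → ℝ} (hpv0 : ∀ i, 0 ≤ pv i) (hpv1 : ∀ i, pv i ≤ 1)
    (ω : Flags N T) : 0 ≤ weight pv ω := by
  rw [weight_eq_prod_flagProb]
  exact prod_nonneg fun x _ => flagProb_nonneg hpv0 hpv1 _ _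

def restWeight (pv : Fin N → ℝ) (i : Fin N) (t : Fin T) (ω : Flags N T) : ℝ :=
  ∏ x ∈ univ.erase (i, t), flagProb pv x.1 (ω x.1 x.2)

lemma weight_eq_flagProb_mul_restWeight (pv : Fin N → ℝ) (i : Fin N) (t : Fin T)
    (ω : Flags N T) : weight pv ω = flagProb pv i (ω i t) * restWeight pv i t ω := by
  rw [weight_eq_prod_flagProb, restWeight]
  exact (mul_prod_erase univ (fun x : Fin N × Fin T => flagProb pv x.1 (ω x.1 x.2))
    (mem_univ (i, t))).symm

lemma restWeight_setFlag (pv : Fin N → ℝ) (i : Fin N) (t : Fin T) (b : Bool)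
    (ω : Flags N T) : restWeight pv i t (setFlag i t b ω) = restWeight pv i t ω := by
  refine prod_congr rfl fun x hx => ?_
  rw [setFlag_of_ne _ _ fun h => (mem_erase.1 hx).1 (Prod.ext h.1 h.2)]

lemma sum_weight_mul_nonpos {pv : Fin N → ℝ} (hpv0 : ∀ i, 0 ≤ pv i) (hpv1 : ∀ i, pv i ≤ 1)
    (i : Fin N) (t : Fin T) {F : Flags N T → ℝ}
    (hF : ∀ ω, ω i t = false → (1 - pv i) * F ω + pv i * F (setFlag i t true ω) ≤ 0) :
    ∑ ω, weight pv ω * F ω ≤ 0 := by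
  rw [sum_eq_sum_filter_add_setFlag i t]
  refine sum_nonpos fun ω hω => ?_
  have hωit : ω i t = false := (mem_filter.1 hω).2
  have hR : 0 ≤ restWeight pv i t ω := prod_nonneg fun x _ => flagProb_nonneg hpv0 hpv1 _ _
  rw [weight_eq_flagProb_mul_restWeight pv i t ω, weight_eq_flagProb_mul_restWeight pv i t,
    restWeight_setFlag, setFlag_self, hωit]
  change (1 - pv i) * _ * F ω + pv i * _ * F _ ≤ 0
  linear_combination mul_nonpos_of_nonneg_of_nonpos hR (hF ω hωit)

end Flags

section Dynamics

variable {N T : ℕ} {Nbr : Fin T → Finset (Fin N)}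

def busy (ρ : Policy N T Nbr) (ω : Flags N T) (n : ℕ) : Finset (Fin N) :=
  (stateUpTo ρ ω n).1

lemma stateUpTo_succ (ρ : Policy N T Nbr) (ω : Flags N T) (t : Fin T) :
    stateUpTo ρ ω (t + 1) = step ρ ω (stateUpTo ρ ω t) t := by
  rw [stateUpTo, List.take_add_one, List.getElem?_eq_getElem (by simp), List.foldl_append]
  simp [stateUpTo]

lemma notMem_avail {ρ : Policy N T Nbr} {ω : Flags N T} {t : Fin T} {i : Fin N} :
    i ∉ avail ρ ω t ↔ i ∈ busy ρ ω t ∧ ω i t = false := by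
  simp [avail, busy]

lemma mem_busy_succ {ρ : Policy N T Nbr} {ω : Flags N T} {t : Fin T} {i : Fin N} :
    i ∈ busy ρ ω (t + 1) ↔ act ρ ω t = some i ∨ i ∉ avail ρ ω t := by
  have hstep : busy ρ ω (t + 1) = (act ρ ω t).elim ((busy ρ ω t).filter fun j => ω j t = false)
      fun a => insert a ((busy ρ ω t).filter fun j => ω j t = false) := by
    rw [busy, stateUpTo_succ]
    unfold act avail
    simp only [step]
    split <;> simp_all [busy]
  rw [hstep, notMem_avail]
  rcases act ρ ω t with _ | j
  · simp
  · simp only [Option.elim, mem_insert, mem_filter, Option.some.injEq]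
    tauto

lemma act_mem {ρ : Policy N T Nbr} {ω : Flags N T} {t : Fin T} {i : Fin N}
    (h : act ρ ω t = some i) : i ∈ avail ρ ω t ∩ Nbr t :=
  ρ.feasible t _ _ i h

lemma stateUpTo_setFlag (ρ : Policy N T Nbr) (ω : Flags N T) (i : Fin N) (t : Fin T)
    (b : Bool) : ∀ {n : ℕ}, n ≤ t → stateUpTo ρ (setFlag i t b ω) n = stateUpTo ρ ω n
  | 0, _ => rfl
  | n + 1, hn => by
    have hnt : n < t := hn
    have hflag : ∀ j, setFlag i t b ω j ⟨n, hnt.trans t.isLt⟩ = ω j ⟨n, hnt.trans t.isLt⟩ :=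
      fun j => setFlag_of_ne b ω fun h => hnt.ne (congrArg Fin.val h.2)
    rw [stateUpTo_succ ρ _ ⟨n, hnt.trans t.isLt⟩, stateUpTo_succ ρ _ ⟨n, hnt.trans t.isLt⟩,
      stateUpTo_setFlag ρ ω i t b hnt.le]
    simp only [step, hflag]

lemma avail_setFlag_true (ρ : Policy N T Nbr) (ω : Flags N T) (i : Fin N) (t : Fin T) :
    avail ρ (setFlag i t true ω) t = insert i (avail ρ ω t) := by
  ext j
  by_cases hj : j = i
  · subst hj
    simp [avail]
  · rw [mem_insert, or_iff_right hj, ← not_iff_not, notMem_avail, notMem_avail, busy,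
      busy, stateUpTo_setFlag ρ ω i t true le_rfl, setFlag_of_ne _ _ fun h => hj h.1]

lemma act_setFlag_true {ρ : Policy N T Nbr} {ω : Flags N T} {i : Fin N} {t : Fin T}
    (hi : i ∈ avail ρ ω t) : act ρ (setFlag i t true ω) t = act ρ ω t := by
  unfold act
  rw [avail_setFlag_true, insert_eq_of_mem hi, stateUpTo_setFlag ρ ω i t true le_rfl]

end Dynamics

section Greedy

variable {N T : ℕ} {Nbr : Fin T → Finset (Fin N)}

lemma act_greedy (ω : Flags N T) (t : Fin T) :
    act (greedy N T Nbr) ω t = if h : (avail (greedy N T Nbr) ω t ∩ Nbr t).Nonempty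
      then some ((avail (greedy N T Nbr) ω t ∩ Nbr t).max' h) else none :=
  rfl

lemma exists_act_greedy_ge {ω : Flags N T} {t : Fin T} {i : Fin N}
    (hi : i ∈ avail (greedy N T Nbr) ω t ∩ Nbr t) :
    ∃ j, act (greedy N T Nbr) ω t = some j ∧ i ≤ j :=
  ⟨_, by rw [act_greedy, dif_pos ⟨i, hi⟩], le_max' _ i hi⟩

lemma act_greedy_setFlag_true {ω : Flags N T} {t : Fin T} {i : Fin N} (hi : i ∈ Nbr t) :
    act (greedy N T Nbr) (setFlag i t true ω) t = some i ∨
      act (greedy N T Nbr) (setFlag i t true ω) t = act (greedy N T Nbr) ω t := by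
  rw [act_greedy, act_greedy, avail_setFlag_true, insert_inter_of_mem hi,
    dif_pos (insert_nonempty _ _)]
  by_cases hS : (avail (greedy N T Nbr) ω t ∩ Nbr t).Nonempty
  · rw [max'_insert _ _ hS, dif_pos hS]
    rcases max_choice i ((avail (greedy N T Nbr) ω t ∩ Nbr t).max' hS) with h | h <;>
      simp [h]
  · left
    simp [not_nonempty_iff_eq_empty.1 hS]

end Greedy

section Potential

variable {N T : ℕ} {Nbr : Fin T → Finset (Fin N)}

def busyDiff (π : Policy N T Nbr) (ω : Flags N T) (n : ℕ) : Finset (Fin N) :=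
  busy (greedy N T Nbr) ω n \ busy π ω n

lemma busyDiff_setFlag (π : Policy N T Nbr) (ω : Flags N T) (i : Fin N) (t : Fin T) (b : Bool) :
    busyDiff π (setFlag i t b ω) t = busyDiff π ω t := by
  simp only [busyDiff, busy, stateUpTo_setFlag _ ω i t b le_rfl]

lemma mem_busyDiff_of_notMem_avail {π : Policy N T Nbr} {ω : Flags N T} {t : Fin T} {i : Fin N}
    (hπ : i ∈ avail π ω t) (hg : i ∉ avail (greedy N T Nbr) ω t) : i ∈ busyDiff π ω t := by
  rw [notMem_avail] at hg
  exact mem_sdiff.2 ⟨hg.1, fun h => notMem_avail.2 ⟨h, hg.2⟩ hπ⟩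

lemma busyDiff_succ_subset (π : Policy N T Nbr) (ω : Flags N T) (t : Fin T) :
    busyDiff π ω (t + 1) ⊆ busyDiff π ω t \ (act π ω t).toFinset
      ∪ (act (greedy N T Nbr) ω t).toFinset \ (act π ω t).toFinset := by
  intro j hj
  simp only [busyDiff, mem_sdiff, mem_busy_succ, notMem_avail, not_or, not_and] at hj
  simp only [busyDiff, mem_union, mem_sdiff, Option.mem_toFinset, Option.mem_def]
  grind

lemma sum_toFinset_sdiff_le {r : Fin N → ℝ} (hr0 : ∀ i, 0 ≤ r i) (o : Option (Fin N))
    (s : Finset (Fin N)) : ∑ i ∈ o.toFinset \ s, r i ≤ o.elim 0 r := by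
  rcases o with _ | j
  · simp
  · exact (sum_le_sum_of_subset_of_nonneg sdiff_subset fun i _ _ => hr0 i).trans (by simp)

lemma elim_nonneg {r : Fin N → ℝ} (hr0 : ∀ i, 0 ≤ r i) (o : Option (Fin N)) :
    0 ≤ o.elim 0 r := by
  rcases o with _ | j
  exacts [le_rfl, hr0 j]

lemma act_setFlag_true_of_mem_busyDiff {π : Policy N T Nbr} {ω : Flags N T} {t : Fin T}
    {i : Fin N} (hi : i ∈ busyDiff π ω t) : act π (setFlag i t true ω) t = act π ω t :=
  act_setFlag_true <| not_not.1 fun h => (mem_sdiff.1 hi).2 (notMem_avail.1 h).1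

abbrev MatchesBusyDiff (π : Policy N T Nbr) (ω : Flags N T) (t : Fin T) (i : Fin N) : Prop :=
  act π ω t = some i ∧ i ∈ busyDiff π ω t

lemma matchesBusyDiff_setFlag_true_iff {π : Policy N T Nbr} {ω : Flags N T} {t : Fin T}
    {i : Fin N} : MatchesBusyDiff π (setFlag i t true ω) t i ↔ MatchesBusyDiff π ω t i := by
  rw [MatchesBusyDiff, MatchesBusyDiff, busyDiff_setFlag]
  exact and_congr_left fun hi => by rw [act_setFlag_true_of_mem_busyDiff hi]

variable (r : Fin N → ℝ) (p : ℝ) (π : Policy N T Nbr)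

noncomputable def potential (ω : Flags N T) (n : ℕ) : ℝ :=
  ∑ i ∈ busyDiff π ω n, r i

noncomputable def excess (ω : Flags N T) (t : Fin T) : ℝ :=
  (1 + p) * (act π ω t).elim 0 r - 2 * (act (greedy N T Nbr) ω t).elim 0 r
    + (1 - p) * (potential r π ω (t + 1) - potential r π ω t)

variable {r p π}

lemma potential_succ_le (hr0 : ∀ i, 0 ≤ r i) (ω : Flags N T) (t : Fin T) :
    potential r π ω (t + 1) ≤ ∑ i ∈ busyDiff π ω t \ (act π ω t).toFinset, r i
      + ∑ i ∈ (act (greedy N T Nbr) ω t).toFinset \ (act π ω t).toFinset, r i := by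
  have hinter := sum_union_inter (s₁ := busyDiff π ω t \ (act π ω t).toFinset)
    (s₂ := (act (greedy N T Nbr) ω t).toFinset \ (act π ω t).toFinset) (f := r)
  have hnonneg := sum_nonneg fun i (_ : i ∈ (busyDiff π ω t \ (act π ω t).toFinset) ∩
    ((act (greedy N T Nbr) ω t).toFinset \ (act π ω t).toFinset)) => hr0 i
  have hsub := sum_le_sum_of_subset_of_nonneg (busyDiff_succ_subset π ω t) fun i _ _ => hr0 i
  rw [potential]
  linarith

lemma potential_succ_le_add (hr0 : ∀ i, 0 ≤ r i) (ω : Flags N T) (t : Fin T) :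
    potential r π ω (t + 1) ≤ potential r π ω t + (act (greedy N T Nbr) ω t).elim 0 r :=
  (potential_succ_le hr0 ω t).trans <| add_le_add
    (sum_le_sum_of_subset_of_nonneg sdiff_subset fun i _ _ => hr0 i)
    (sum_toFinset_sdiff_le hr0 _ _)

lemma potential_succ_le_sub {ω : Flags N T} {t : Fin T} {i : Fin N} (hr0 : ∀ i, 0 ≤ r i)
    (ha : act π ω t = some i) (hi : i ∈ busyDiff π ω t) :
    potential r π ω (t + 1) ≤ potential r π ω t - r i
      + ∑ j ∈ (act (greedy N T Nbr) ω t).toFinset \ {i}, r j := by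
  have h := potential_succ_le (π := π) hr0 ω t
  rwa [ha, Option.toFinset_some, sdiff_singleton_eq_erase, sum_erase_eq_sub hi] at h

lemma excess_nonpos (hr0 : ∀ i, 0 ≤ r i) (hrmono : Monotone r) (hp0 : 0 ≤ p) (hp1 : p ≤ 1)
    {ω : Flags N T} {t : Fin T} (h : ∀ i, ¬MatchesBusyDiff π ω t i) :
    excess r p π ω t ≤ 0 := by
  have hpot := potential_succ_le_add (π := π) hr0 ω t
  have hg := elim_nonneg hr0 (act (greedy N T Nbr) ω t)
  rw [excess]
  rcases ha : act π ω t with _ | i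
  · rw [Option.elim_none]
    nlinarith
  · have hav := act_mem ha
    have hig : i ∈ avail (greedy N T Nbr) ω t := by
      by_contra hig
      exact h i ⟨ha, mem_busyDiff_of_notMem_avail (mem_inter.1 hav).1 hig⟩
    obtain ⟨j, hj, hij⟩ := exists_act_greedy_ge (mem_inter.2 ⟨hig, (mem_inter.1 hav).2⟩)
    have hrij := hrmono hij
    rw [hj, Option.elim_some] at hpot
    rw [hj, Option.elim_some, Option.elim_some]
    nlinarith

lemma excess_le_of_mem_busyDiff (hr0 : ∀ i, 0 ≤ r i) (hp1 : p ≤ 1)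
    {ω : Flags N T} {t : Fin T} {i : Fin N} (ha : act π ω t = some i)
    (hi : i ∈ busyDiff π ω t) :
    excess r p π ω t ≤ 2 * p * r i - (1 + p) * (act (greedy N T Nbr) ω t).elim 0 r := by
  have hpot := potential_succ_le_sub hr0 ha hi
  have hg := sum_toFinset_sdiff_le hr0 (act (greedy N T Nbr) ω t) {i}
  rw [excess, ha, Option.elim_some]
  nlinarith

lemma excess_le_of_act_greedy_eq (hr0 : ∀ i, 0 ≤ r i) (hp1 : p ≤ 1)
    {ω : Flags N T} {t : Fin T} {i : Fin N} (ha : act π ω t = some i)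
    (hg : act (greedy N T Nbr) ω t = some i) (hi : i ∈ busyDiff π ω t) :
    excess r p π ω t ≤ 2 * (p - 1) * r i := by
  have hpot := potential_succ_le_sub hr0 ha hi
  rw [hg, Option.toFinset_some, sdiff_self, bot_eq_empty, sum_empty] at hpot
  rw [excess, ha, hg, Option.elim_some]
  nlinarith

end Potential

section Expectation

variable {N T : ℕ} {Nbr : Fin T → Finset (Fin N)} {r : Fin N → ℝ} {p : ℝ} {pv : Fin N → ℝ}
  {π : Policy N T Nbr}

lemma excess_pair_nonpos (hr0 : ∀ i, 0 ≤ r i) (hrmono : Monotone r) (hp0 : 0 ≤ p) (hp1 : p ≤ 1)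
    {ω : Flags N T} {t : Fin T} {i : Fin N} (hpi : p ≤ pv i) (hpi1 : pv i ≤ 1)
    (h : MatchesBusyDiff π ω t i) :
    (1 - pv i) * excess r p π ω t + pv i * excess r p π (setFlag i t true ω) t ≤ 0 := by
  obtain ⟨ha, hi⟩ := h
  obtain ⟨ha', hi'⟩ := matchesBusyDiff_setFlag_true_iff.2 ⟨ha, hi⟩
  have hnbr : i ∈ Nbr t := (mem_inter.1 (act_mem ha)).2
  have hX := excess_le_of_mem_busyDiff hr0 hp1 ha hi
  have hg := elim_nonneg hr0 (act (greedy N T Nbr) ω t)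
  have hq0 : 0 ≤ pv i := hp0.trans hpi
  have hq1 : 0 ≤ 1 - pv i := sub_nonneg.2 hpi1
  rcases act_greedy_setFlag_true (ω := ω) hnbr with hg' | hg'
  · have hX' := excess_le_of_act_greedy_eq hr0 hp1 ha' hg' hi'
    linarith [mul_le_mul_of_nonneg_left hX hq1, mul_le_mul_of_nonneg_left hX' hq0,
      mul_nonneg (mul_nonneg hq1 (by linarith : 0 ≤ 1 + p)) hg,
      mul_nonneg (sub_nonneg.2 hpi) (hr0 i)]
  · have hX' := excess_le_of_mem_busyDiff hr0 hp1 ha' hi'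
    obtain ⟨j, hj, hij⟩ := exists_act_greedy_ge (ω := setFlag i t true ω)
      (mem_inter.2 ⟨avail_setFlag_true (greedy N T Nbr) ω i t ▸ mem_insert_self i _, hnbr⟩)
    rw [hg'] at hX' hj
    rw [hj, Option.elim_some] at hX hX'
    linarith [mul_le_mul_of_nonneg_left hX hq1, mul_le_mul_of_nonneg_left hX' hq0,
      mul_le_mul_of_nonneg_left (hrmono hij) hp0, mul_le_mul_of_nonneg_right hp1 (hr0 i),
      hrmono hij]

lemma excess_le_sum_ite (hr0 : ∀ i, 0 ≤ r i) (hrmono : Monotone r) (hp0 : 0 ≤ p)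
    (hp1 : p ≤ 1) (ω : Flags N T) (t : Fin T) :
    excess r p π ω t ≤ ∑ i, if MatchesBusyDiff π ω t i then excess r p π ω t else 0 := by
  by_cases h : ∃ i, MatchesBusyDiff π ω t i
  · obtain ⟨i, hi⟩ := h
    have honly : ∀ j ≠ i, ¬MatchesBusyDiff π ω t j := fun j hj hj' =>
      hj (Option.some.inj (hj'.1.symm.trans hi.1))
    rw [Fintype.sum_eq_single i fun j hj => if_neg (honly j hj), if_pos hi]
  · rw [sum_eq_zero fun i _ => if_neg fun hi => h ⟨i, hi⟩]
    exact excess_nonpos hr0 hrmono hp0 hp1 fun i hi => h ⟨i, hi⟩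

lemma sum_weight_mul_excess_nonpos (hr0 : ∀ i, 0 ≤ r i) (hrmono : Monotone r)
    (hpv0 : ∀ i, 0 ≤ pv i) (hpv1 : ∀ i, pv i ≤ 1) (hp0 : 0 ≤ p) (hp1 : p ≤ 1)
    (hple : ∀ i, p ≤ pv i) (t : Fin T) :
    ∑ ω, weight pv ω * excess r p π ω t ≤ 0 := by
  calc ∑ ω, weight pv ω * excess r p π ω t
      ≤ ∑ ω, weight pv ω * ∑ i, if MatchesBusyDiff π ω t i then excess r p π ω t else 0 :=
        sum_le_sum fun ω _ => mul_le_mul_of_nonneg_left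
          (excess_le_sum_ite hr0 hrmono hp0 hp1 ω t) (weight_nonneg hpv0 hpv1 ω)
    _ = ∑ i, ∑ ω, weight pv ω * if MatchesBusyDiff π ω t i then excess r p π ω t else 0 := by
        simp_rw [mul_sum]
        exact sum_comm
    _ ≤ 0 := sum_nonpos fun i _ => sum_weight_mul_nonpos hpv0 hpv1 i t fun ω _ => by
        by_cases h : MatchesBusyDiff π ω t i
        · rw [if_pos h, if_pos (matchesBusyDiff_setFlag_true_iff.2 h)]
          exact excess_pair_nonpos hr0 hrmono hp0 hp1 (hple i) (hpv1 i) h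
        · rw [if_neg h, if_neg (mt matchesBusyDiff_setFlag_true_iff.1 h)]
          simp

lemma sum_excess_eq (r : Fin N → ℝ) (p : ℝ) (π : Policy N T Nbr) (ω : Flags N T) :
    ∑ t, excess r p π ω t = (1 + p) * reward r π ω - 2 * reward r (greedy N T Nbr) ω
      + (1 - p) * (potential r π ω T - potential r π ω 0) := by
  have htel : ∑ t : Fin T, (potential r π ω (t + 1) - potential r π ω t)
      = potential r π ω T - potential r π ω 0 := by
    rw [Fin.sum_univ_eq_sum_range (fun n => potential r π ω (n + 1) - potential r π ω n),
      sum_range_sub]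
  simp only [excess, reward, sum_add_distrib, sum_sub_distrib, ← mul_sum] at htel ⊢
  rw [htel]

lemma potential_zero (r : Fin N → ℝ) (π : Policy N T Nbr) (ω : Flags N T) :
    potential r π ω 0 = 0 := by
  simp [potential, busyDiff, busy, stateUpTo]

theorem one_add_mul_expect_reward_le (hr0 : ∀ i, 0 ≤ r i) (hrmono : Monotone r)
    (hpv0 : ∀ i, 0 ≤ pv i) (hpv1 : ∀ i, pv i ≤ 1) (hp0 : 0 ≤ p) (hp1 : p ≤ 1)
    (hple : ∀ i, p ≤ pv i) (π : Policy N T Nbr) :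
    (1 + p) * expect pv (reward r π) ≤ 2 * greedyVal N T Nbr r pv := by
  have hpath : ∀ ω, (1 + p) * reward r π ω - 2 * reward r (greedy N T Nbr) ω
      ≤ ∑ t, excess r p π ω t := fun ω => by
    have hT : 0 ≤ potential r π ω T := sum_nonneg fun i _ => hr0 i
    rw [sum_excess_eq, potential_zero, sub_zero]
    linarith [mul_nonneg (sub_nonneg.2 hp1) hT]
  have hsum : ∑ ω, weight pv ω * ((1 + p) * reward r π ω - 2 * reward r (greedy N T Nbr) ω)
      ≤ 0 := calc
    _ ≤ ∑ ω, weight pv ω * ∑ t, excess r p π ω t :=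
      sum_le_sum fun ω _ => mul_le_mul_of_nonneg_left (hpath ω) (weight_nonneg hpv0 hpv1 ω)
    _ = ∑ t, ∑ ω, weight pv ω * excess r p π ω t := by
      simp_rw [mul_sum]
      exact sum_comm
    _ ≤ 0 := sum_nonpos fun t _ =>
      sum_weight_mul_excess_nonpos hr0 hrmono hpv0 hpv1 hp0 hp1 hple t
  unfold greedyVal _root_.expect
  rw [← sub_nonpos, mul_sum, mul_sum, ← sum_sub_distrib]
  convert hsum using 2
  ring

end Expectation

theorem greedy_geometric_competitive_general
    (N T : ℕ)
    (r : Fin N → ℝ) (hr0 : ∀ i, 0 ≤ r i) (hrmono : Monotone r)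
    (Nbr : Fin T → Finset (Fin N))
    (pv : Fin N → ℝ) (hpv0 : ∀ i, 0 ≤ pv i) (hpv1 : ∀ i, pv i ≤ 1)
    (p : ℝ) (hp : p = ⨅ i, pv i) :
    ((1 + p) / 2) * optVal N T Nbr r pv ≤ greedyVal N T Nbr r pv := by
  have hple : ∀ i, p ≤ pv i := fun i => hp ▸ ciInf_le (Set.finite_range pv).bddBelow i
  have hp0 : 0 ≤ p := hp ▸ Real.iInf_nonneg hpv0
  have hp1 : p ≤ 1 := by
    rcases isEmpty_or_nonempty (Fin N) with _ | ⟨⟨i⟩⟩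
    · simp [hp]
    · exact (hple i).trans (hpv1 i)
  have hopt : optVal N T Nbr r pv ≤ 2 / (1 + p) * greedyVal N T Nbr r pv := by
    have : Nonempty (Policy N T Nbr) := ⟨greedy N T Nbr⟩
    refine ciSup_le fun π => ?_
    rw [div_mul_eq_mul_div, le_div_iff₀ (by linarith), mul_comm]
    exact one_add_mul_expect_reward_le hr0 hrmono hpv0 hpv1 hp0 hp1 hple π
  calc ((1 + p) / 2) * optVal N T Nbr r pv
      ≤ ((1 + p) / 2) * (2 / (1 + p) * greedyVal N T Nbr r pv) := by gcongr
    _ = greedyVal N T Nbr r pv := by field_simp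

/-- **Theorem 2 (geometric usage durations).**
For any instance of the online matching problem with reusable resources in
which every usage-duration distribution is geometric, `F i = Geometric (pv i)`
(encoded by the shared-Bernoulli return flags), if `p = min_i pv i` then
`Greedy(I) / OPT(I) ≥ (1 + p) / 2`, i.e. `((1 + p) / 2) * OPT(I) ≤ Greedy(I)`. -/
theorem greedy_geometric_competitive
    (N T : ℕ) (hN : 0 < N)
    (r : Fin N → ℝ) (hr0 : ∀ i, 0 ≤ r i) (hrmono : Monotone r)
    (Nbr : Fin T → Finset (Fin N))
    (pv : Fin N → ℝ) (hpv0 : ∀ i, 0 ≤ pv i) (hpv1 : ∀ i, pv i ≤ 1)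
    (p : ℝ) (hp : p = ⨅ i, pv i) :
    ((1 + p) / 2) * optVal N T Nbr r pv ≤ greedyVal N T Nbr r pv :=
  greedy_geometric_competitive_general N T r hr0 hrmono Nbr pv hpv0 hpv1 p hp
end

section
/- Under the shared-Bernoulli coupling of Greedy and OPT with geometric usage durations, define F_{it} = {i ∉ I_t} ∪ {A_t = i} (resource i unavailable at the end of time t under Greedy) and F*_{it} = {i ∉ I*_t} ∪ {A*_t = i} (analogously for OPT). If the event {A*_t = i and A_t < i} occurs (i.e., OPT matches i at time t while Greedy matches a strictly lower-indexed resource or nothing), then the event F_{i,t-1} ∩ ¬F*_{i,t-1} occurs. -/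
open Finset

/-- The set of resources unavailable under `π` at the end of step `n - 1`
(equivalently, just before the returns at the start of step `n`).  For
`n = t + 1` membership `i ∈ busyEnd π ω (t+1)` is exactly the event
`F_{it} = {i ∉ I_t} ∪ {A_t = i}` of the paper: resource `i` was either
unavailable at time `t` or matched at time `t`; for `n = 0` it is the empty
(always false) event, matching the convention that all resources start
available. -/
def busyEnd {N T : ℕ} {Nbr : Fin T → Finset (Fin N)} (π : Policy N T Nbr)
    (ω : Flags N T) (n : ℕ) : Finset (Fin N) :=
  (stateUpTo π ω n).1

/-- The event `A_t < i`: the policy matched a resource of strictly smaller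
index than `i`, or made no match. -/
def matchedBelow {N T : ℕ} {Nbr : Fin T → Finset (Fin N)} (π : Policy N T Nbr)
    (ω : Flags N T) (t : Fin T) (i : Fin N) : Prop :=
  (act π ω t).elim True (fun j => j < i)

/-! If OPT matches `i` at time `t`, then `i` is available to OPT and adjacent to `t`; Greedy,
which takes the largest available neighbour, can then match below `i` only if `i` is unavailable
to it. So `i` was busy for Greedy at the end of `t - 1` and did not return at `t`, and since OPT
sees the same return flag, `i` can be available to OPT only if it was already free at the end
of `t - 1`. -/

theorem mem_avail_iff {N T : ℕ} {Nbr : Fin T → Finset (Fin N)} (π : Policy N T Nbr)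
    (ω : Flags N T) (t : Fin T) (i : Fin N) :
    i ∈ avail π ω t ↔ i ∉ busyEnd π ω t.val ∨ ω i t = true := by
  simp only [avail, busyEnd, mem_sdiff, mem_univ, mem_filter, true_and, not_and_or,
    Bool.not_eq_false]

theorem act_mem_avail_inter {N T : ℕ} {Nbr : Fin T → Finset (Fin N)} {π : Policy N T Nbr}
    {ω : Flags N T} {t : Fin T} {i : Fin N} (h : act π ω t = some i) :
    i ∈ avail π ω t ∩ Nbr t :=
  π.feasible t _ _ i h

theorem not_matchedBelow_greedy {N T : ℕ} {Nbr : Fin T → Finset (Fin N)} {ω : Flags N T}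
    {t : Fin T} {i : Fin N} (hi : i ∈ avail (greedy N T Nbr) ω t ∩ Nbr t) :
    ¬ matchedBelow (greedy N T Nbr) ω t i := by
  have hne : (avail (greedy N T Nbr) ω t ∩ Nbr t).Nonempty := ⟨i, hi⟩
  have hact : act (greedy N T Nbr) ω t
      = some ((avail (greedy N T Nbr) ω t ∩ Nbr t).max' hne) := dif_pos hne
  rw [matchedBelow, hact]
  exact not_lt.2 (le_max' _ i hi)

theorem lost_match_implies_busy_greedy_free_opt_general
    (N T : ℕ)
    (Nbr : Fin T → Finset (Fin N))
    (π : Policy N T Nbr) (ω : Flags N T) (t : Fin T) (i : Fin N)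
    (hOPT : act π ω t = some i)
    (hG : matchedBelow (greedy N T Nbr) ω t i) :
    i ∈ busyEnd (greedy N T Nbr) ω t.val ∧ i ∉ busyEnd π ω t.val := by
  obtain ⟨hiOpt, hiNbr⟩ := mem_inter.1 (act_mem_avail_inter hOPT)
  have hiGreedy : i ∉ avail (greedy N T Nbr) ω t := fun h =>
    not_matchedBelow_greedy (mem_inter.2 ⟨h, hiNbr⟩) hG
  rw [mem_avail_iff, not_or, not_not, Bool.not_eq_true] at hiGreedy
  obtain ⟨hbusy, hstays⟩ := hiGreedy
  refine ⟨hbusy, fun hbusyOpt => ?_⟩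
  rcases (mem_avail_iff π ω t i).1 hiOpt with hfree | hreturns
  · exact hfree hbusyOpt
  · exact Bool.false_ne_true (hstays ▸ hreturns)

/-- **Claim (necessary condition for a lost match).**  Under the
shared-Bernoulli coupling of Greedy and any benchmark policy `π` (in
particular the optimal clairvoyant policy `OPT`) with geometric usage
durations: if on a sample path `ω` the event `{A*_t = i and A_t < i}` occurs
(OPT matches `i` at time `t` while Greedy matches a strictly lower-indexed
resource or nothing), then the event `F_{i,t-1} ∩ ¬F*_{i,t-1}` occurs, where
`F_{i,t-1}` (resp. `F*_{i,t-1}`) is the event that resource `i` is unavailable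
at the end of time `t-1` under Greedy (resp. under `π`), i.e.
`F_{it} = {i ∉ I_t} ∪ {A_t = i}`. -/
theorem lost_match_implies_busy_greedy_free_opt
    (N T : ℕ) (r : Fin N → ℝ) (hr0 : ∀ i, 0 ≤ r i) (hrmono : Monotone r)
    (Nbr : Fin T → Finset (Fin N))
    (pv : Fin N → ℝ) (hpv0 : ∀ i, 0 ≤ pv i) (hpv1 : ∀ i, pv i ≤ 1)
    (π : Policy N T Nbr) (ω : Flags N T) (t : Fin T) (i : Fin N)
    (hOPT : act π ω t = some i)
    (hG : matchedBelow (greedy N T Nbr) ω t i) :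
    i ∈ busyEnd (greedy N T Nbr) ω t.val ∧ i ∉ busyEnd π ω t.val :=
  lost_match_implies_busy_greedy_free_opt_general N T Nbr π ω t i hOPT hG
end

section
/- Let ALG be any online policy coupled with OPT on a common probability space (preserving marginal laws), and suppose E[Σ_{t=1}^T r_{A_t}] ≥ α · E[Σ_{t=1}^T r*(I_t)] for some α ∈ (0,1], where A_t is ALG's match at time t and I_t is the set of resources available under ALG at time t. Then E[Σ_{t=1}^T Σ_{i=1}^N r_i · 1(A*_t = i, ¬O_{it})] ≤ (1/α) · ALG(I), where O_{it} is the event that every resource j ≥ i is unavailable under ALG at time t; consequently OPT(I) ≤ (1/α)·ALG(I) + LOST, where LOST = E[Σ_{t=1}^T Σ_{i=1}^N r_i · 1(A*_t = i, O_{it})]. -/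
open Finset

/-- `r*(I) = max_{i ∈ I} r i`, with `r*(∅) = 0`. -/
noncomputable def rstar {N : ℕ} (r : Fin N → ℝ) (I : Finset (Fin N)) : ℝ :=
  if h : I.Nonempty then I.sup' h r else 0

/-!
Pointwise, OPT's reward at time `t` splits as the part where some resource `j ≥ A*_t` is still
available to ALG plus the lost part. By monotonicity of `r`, the first part is at most
`r*(I_t)`, and the approximate greediness of ALG bounds `E[Σ_t r*(I_t)]` by `(1/α) · ALG(I)`.
All expectations are finite because each integrand factors through a finite type.
-/

section OptionSum

variable {ι M : Type*} [Fintype ι] [DecidableEq ι] [AddCommMonoid M] {f : ι → M}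

lemma sum_ite_some_and (o : Option ι) (P : ι → Prop) [DecidablePred P] :
    (∑ i, if o = some i ∧ P i then f i else 0) = o.elim 0 fun i => if P i then f i else 0 := by
  cases o <;> simp [ite_and]

lemma sum_ite_some_and_not_add_sum_ite_some_and (o : Option ι) (P : ι → Prop)
    [DecidablePred P] :
    (∑ i, if o = some i ∧ ¬ P i then f i else 0) + (∑ i, if o = some i ∧ P i then f i else 0)
      = o.elim 0 f := by
  rw [sum_ite_some_and, sum_ite_some_and]
  rcases o with _ | i
  · simp
  · by_cases h : P i <;> simp [h]

end OptionSum

section Rewards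

variable {N : ℕ} {r : Fin N → ℝ}

lemma rstar_nonneg (hr0 : ∀ i, 0 ≤ r i) (I : Finset (Fin N)) : 0 ≤ rstar r I := by
  unfold rstar
  split_ifs with h
  · obtain ⟨i, hi⟩ := h
    exact (hr0 i).trans (le_sup' r hi)
  · exact le_rfl

lemma le_rstar_of_mem {I : Finset (Fin N)} {i : Fin N} (hi : i ∈ I) : r i ≤ rstar r I := by
  rw [rstar, dif_pos ⟨i, hi⟩]
  exact le_sup' r hi

lemma sum_ite_some_and_available_le_rstar (hr0 : ∀ i, 0 ≤ r i) (hrmono : Monotone r)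
    (o : Option (Fin N)) (I : Finset (Fin N)) :
    (∑ i, if o = some i ∧ ¬ (∀ j, i ≤ j → j ∉ I) then r i else 0) ≤ rstar r I := by
  rw [sum_ite_some_and]
  rcases o with _ | i
  · exact rstar_nonneg hr0 I
  · dsimp only [Option.elim]
    split_ifs with hO
    · exact rstar_nonneg hr0 I
    · push Not at hO
      obtain ⟨j, hij, hj⟩ := hO
      exact (hrmono hij).trans (le_rstar_of_mem hj)

end Rewards

lemma summable_mul_sum_comp {Ω ι β : Type*} [Fintype ι] [Finite β] {μ : Ω → ℝ}
    (hμ : Summable μ) (hμ0 : ∀ ω, 0 ≤ μ ω) (h : β → ℝ) (φ : ι → Ω → β) :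
    Summable fun ω => μ ω * ∑ t, h (φ t ω) := by
  obtain ⟨C, hC⟩ := Finite.exists_le fun a : ι → β => ‖∑ t, h (a t)‖
  refine (hμ.mul_right C).of_norm_bounded fun ω => ?_
  rw [norm_mul, Real.norm_of_nonneg (hμ0 ω)]
  exact mul_le_mul_of_nonneg_left (hC fun t => φ t ω) (hμ0 ω)

theorem opt_le_inv_alpha_alg_add_lost_general
    (N T : ℕ) (r : Fin N → ℝ) (hr0 : ∀ i, 0 ≤ r i) (hrmono : Monotone r)
    (Ω : Type*) (μ : Ω → ℝ)
    (hμ0 : ∀ ω, 0 ≤ μ ω) (hμ1 : ∑' ω, μ ω = 1)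
    (Iav : Fin T → Ω → Finset (Fin N))
    (A Astar : Fin T → Ω → Option (Fin N))
    (α : ℝ) (hα0 : 0 < α)
    (happrox : (∑' ω, μ ω * ∑ t : Fin T, (A t ω).elim 0 r)
        ≥ α * ∑' ω, μ ω * ∑ t : Fin T, rstar r (Iav t ω)) :
    (∑' ω, μ ω * ∑ t : Fin T, ∑ i : Fin N,
        if Astar t ω = some i ∧ ¬ (∀ j, i ≤ j → j ∉ Iav t ω) then r i else 0)
      ≤ (1 / α) * ∑' ω, μ ω * ∑ t : Fin T, (A t ω).elim 0 r
    ∧ (∑' ω, μ ω * ∑ t : Fin T, (Astar t ω).elim 0 r)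
      ≤ (1 / α) * (∑' ω, μ ω * ∑ t : Fin T, (A t ω).elim 0 r)
        + ∑' ω, μ ω * ∑ t : Fin T, ∑ i : Fin N,
            if Astar t ω = some i ∧ (∀ j, i ≤ j → j ∉ Iav t ω) then r i else 0 := by
  have hμ : Summable μ := by
    by_contra h
    simp [tsum_eq_zero_of_not_summable h] at hμ1
  have summable_opt_part (P : Fin N → Finset (Fin N) → Prop) [DecidableRel P] :=
    summable_mul_sum_comp hμ hμ0
      (fun p : Option (Fin N) × Finset (Fin N) => ∑ i, if p.1 = some i ∧ P i p.2 then r i else 0)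
      fun t ω => (Astar t ω, Iav t ω)
  have hreached := calc
    (∑' ω, μ ω * ∑ t : Fin T, ∑ i : Fin N,
        if Astar t ω = some i ∧ ¬ (∀ j, i ≤ j → j ∉ Iav t ω) then r i else 0)
      ≤ ∑' ω, μ ω * ∑ t : Fin T, rstar r (Iav t ω) :=
        Summable.tsum_le_tsum
          (fun ω => mul_le_mul_of_nonneg_left (sum_le_sum fun t _ =>
            sum_ite_some_and_available_le_rstar hr0 hrmono _ _) (hμ0 ω))
          (summable_opt_part fun i I => ¬ ∀ j, i ≤ j → j ∉ I)
          (summable_mul_sum_comp hμ hμ0 (rstar r) Iav)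
    _ ≤ (1 / α) * ∑' ω, μ ω * ∑ t : Fin T, (A t ω).elim 0 r := by
        rw [one_div_mul_eq_div, le_div_iff₀ hα0, mul_comm]
        exact happrox
  refine ⟨hreached, ?_⟩
  refine Eq.trans_le ?_ (add_le_add_left hreached _)
  refine (tsum_congr fun ω => ?_).trans <|
    (summable_opt_part fun i I => ¬ ∀ j, i ≤ j → j ∉ I).tsum_add
      (summable_opt_part fun i I => ∀ j, i ≤ j → j ∉ I)
  rw [← mul_add, ← sum_add_distrib]
  simp only [sum_ite_some_and_not_add_sum_ite_some_and]

/-- **Decomposition of OPT's reward against an approximately-greedy `ALG`.**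

Consider an instance of the online matching problem with reusable resources,
with `N` resources, rewards `0 ≤ r 0 ≤ ... ≤ r (N-1)`, `T` requests and
neighborhoods `Nbr`.  An online policy `ALG` and the clairvoyant benchmark
`OPT` are run on a common (countable) probability space `Ω` with weights `μ`
under any coupling preserving the marginal law of each policy:

* `Iav t ω` (resp. `IavStar t ω`) is the set of resources available to `ALG`
  (resp. to `OPT`) at time `t`;
* `A t ω` is `ALG`'s match at time `t` (an available neighboring resource,
  hypothesis `hA`), and `Astar t ω` is `OPT`'s match (hypothesis `hAstar`);
* `ALG(I) = E[Σ_t r_{A_t}]` and `OPT(I) = E[Σ_t r_{A*_t}]` (marginal laws are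
  preserved);
* `ALG` is `α`-approximately greedy: `E[Σ_t r_{A_t}] ≥ α · E[Σ_t r*(I_t)]` for
  some `α ∈ (0, 1]`.

With `O_{it}` the event that every resource `j ≥ i` is unavailable under `ALG`
at time `t` and `LOST = E[Σ_t Σ_i r i · 1(A*_t = i, O_{it})]`, we have
`E[Σ_t Σ_i r i · 1(A*_t = i, ¬O_{it})] ≤ (1/α) · ALG(I)`; consequently
`OPT(I) ≤ (1/α) · ALG(I) + LOST`. -/
theorem opt_le_inv_alpha_alg_add_lost
    (N T : ℕ) (r : Fin N → ℝ) (hr0 : ∀ i, 0 ≤ r i) (hrmono : Monotone r)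
    (Nbr : Fin T → Finset (Fin N))
    (Ω : Type*) [Countable Ω] (μ : Ω → ℝ)
    (hμ0 : ∀ ω, 0 ≤ μ ω) (hμ1 : ∑' ω, μ ω = 1)
    (Iav IavStar : Fin T → Ω → Finset (Fin N))
    (A Astar : Fin T → Ω → Option (Fin N))
    (hA : ∀ t ω i, A t ω = some i → i ∈ Iav t ω ∩ Nbr t)
    (hAstar : ∀ t ω i, Astar t ω = some i → i ∈ IavStar t ω ∩ Nbr t)
    (α : ℝ) (hα0 : 0 < α) (hα1 : α ≤ 1)
    (happrox : (∑' ω, μ ω * ∑ t : Fin T, (A t ω).elim 0 r)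
        ≥ α * ∑' ω, μ ω * ∑ t : Fin T, rstar r (Iav t ω)) :
    (∑' ω, μ ω * ∑ t : Fin T, ∑ i : Fin N,
        if Astar t ω = some i ∧ ¬ (∀ j, i ≤ j → j ∉ Iav t ω) then r i else 0)
      ≤ (1 / α) * ∑' ω, μ ω * ∑ t : Fin T, (A t ω).elim 0 r
    ∧ (∑' ω, μ ω * ∑ t : Fin T, (Astar t ω).elim 0 r)
      ≤ (1 / α) * (∑' ω, μ ω * ∑ t : Fin T, (A t ω).elim 0 r)
        + ∑' ω, μ ω * ∑ t : Fin T, ∑ i : Fin N,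
            if Astar t ω = some i ∧ (∀ j, i ≤ j → j ∉ Iav t ω) then r i else 0 :=
  opt_le_inv_alpha_alg_add_lost_general N T r hr0 hrmono Ω μ hμ0 hμ1 Iav A Astar α hα0 happrox
end
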